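/- Let f, g : ℝⁿ_{≥0} → ℝⁿ_{≥0} be m-topical maps. Then for every J ⊆ {1,…,n} and every i ∈ {1,…,n}: f(g(𝟙 + t e_J))_i → ∞ as t → ∞ if and only if f(𝟙 + t e_I)_i → ∞ as t → ∞, where I = {j ∈ {1,…,n} : g(𝟙 + t e_J)_j → ∞ as t → ∞}. In other words, the upper signature of f∘g equals the composition of the upper signature of f with the upper signature of g. -/
import Mathlib


open Filter Set

/-- Vectors in ℝⁿ indexed by `Fin n`. -/
abbrev Vec (n : ℕ) := Fin n → ℝ

/-- Entrywise nonnegative vector: an element of ℝⁿ_{≥0}. -/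
def Nonneg {n : ℕ} (x : Vec n) : Prop := ∀ i, 0 ≤ x i

/-- Entrywise positive vector: an element of ℝⁿ_{>0}. -/
def Pos {n : ℕ} (x : Vec n) : Prop := ∀ i, 0 < x i

/-- An m-topical map: continuous on ℝⁿ_{≥0}, preserving ℝⁿ_{≥0}, order-preserving,
homogeneous of degree one, and mapping the interior ℝⁿ_{>0} into itself. -/
structure IsMTopical {n : ℕ} (f : Vec n → Vec n) : Prop where
  map_nonneg : ∀ x, Nonneg x → Nonneg (f x)
  contOn : ContinuousOn f {x : Vec n | Nonneg x}
  mono : ∀ x y, Nonneg x → Nonneg y → x ≤ y → f x ≤ f y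
  hom : ∀ c : ℝ, 0 < c → ∀ x, Nonneg x → f (c • x) = c • f x
  map_pos : ∀ x, Pos x → Pos (f x)

/-- The indicator vector `e_J` of a subset `J ⊆ [n]`. -/
noncomputable def eVec {n : ℕ} (J : Set (Fin n)) : Vec n := J.indicator fun _ => 1

/-- The all-ones vector `𝟙`. -/
def allOnes (n : ℕ) : Vec n := fun _ => 1

lemma eVec_nonneg {n : ℕ} (J : Set (Fin n)) (j : Fin n) : 0 ≤ eVec J j :=
  Set.indicator_nonneg (fun _ _ => zero_le_one) j

lemma eVec_of_mem {n : ℕ} {J : Set (Fin n)} {j : Fin n} (h : j ∈ J) : eVec J j = 1 :=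
  Set.indicator_of_mem h _

lemma eVec_of_not_mem {n : ℕ} {J : Set (Fin n)} {j : Fin n} (h : j ∉ J) : eVec J j = 0 :=
  Set.indicator_of_notMem h _

lemma vec_apply {n : ℕ} (J : Set (Fin n)) (t : ℝ) (j : Fin n) :
    (allOnes n + t • eVec J) j = 1 + t * eVec J j := rfl

lemma vec_nonneg {n : ℕ} (J : Set (Fin n)) {t : ℝ} (ht : 0 ≤ t) :
    Nonneg (allOnes n + t • eVec J) := by
  intro j
  rw [vec_apply]
  have := eVec_nonneg J j
  nlinarith

lemma vec_mono {n : ℕ} (J : Set (Fin n)) {s t : ℝ} (hs : 0 ≤ s) (hst : s ≤ t) :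
    allOnes n + s • eVec J ≤ allOnes n + t • eVec J := by
  intro j
  rw [vec_apply, vec_apply]
  have := eVec_nonneg J j
  nlinarith

lemma allOnes_le_vec {n : ℕ} (J : Set (Fin n)) {t : ℝ} (ht : 0 ≤ t) :
    allOnes n ≤ allOnes n + t • eVec J := by
  intro j
  rw [vec_apply]
  have := eVec_nonneg J j
  show (1:ℝ) ≤ 1 + t * eVec J j
  nlinarith

lemma allOnes_nonneg (n : ℕ) : Nonneg (allOnes n) := fun _ => zero_le_one

lemma tendsto_atTop_iff_of_monoOn (u : ℝ → ℝ)
    (hu : ∀ s t : ℝ, 0 ≤ s → s ≤ t → u s ≤ u t) :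
    Tendsto u atTop atTop ↔ ∀ b : ℝ, ∃ t : ℝ, 0 ≤ t ∧ b ≤ u t := by
  constructor
  · intro h b
    obtain ⟨t, h1, h2⟩ := ((tendsto_atTop.mp h b).and (eventually_ge_atTop 0)).exists
    exact ⟨t, h2, h1⟩
  · intro h
    rw [tendsto_atTop]
    intro b
    obtain ⟨t₀, ht₀, hb⟩ := h b
    filter_upwards [eventually_ge_atTop t₀] with t ht
    exact hb.trans (hu t₀ t ht₀ ht)

/-- The upper signature of a composition is the composition of the upper signatures. -/
theorem upperSignature_comp {n : ℕ} (hn : 0 < n) (f g : Vec n → Vec n)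
    (hf : IsMTopical f) (hg : IsMTopical g) :
    ∀ J : Set (Fin n), ∀ i : Fin n,
      Tendsto (fun t : ℝ => f (g (allOnes n + t • eVec J)) i) atTop atTop ↔
      Tendsto (fun t : ℝ =>
        f (allOnes n + t • eVec {j : Fin n |
            Tendsto (fun s : ℝ => g (allOnes n + s • eVec J) j) atTop atTop}) i)
        atTop atTop := by
  intro J i
  set I : Set (Fin n) :=
    {j : Fin n | Tendsto (fun s : ℝ => g (allOnes n + s • eVec J) j) atTop atTop} with hIdef
  have hne : (Finset.univ : Finset (Fin n)).Nonempty := ⟨⟨0, hn⟩, Finset.mem_univ _⟩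
  have hgmono : ∀ j : Fin n, ∀ s t : ℝ, 0 ≤ s → s ≤ t →
      g (allOnes n + s • eVec J) j ≤ g (allOnes n + t • eVec J) j := fun j s t hs hst =>
    hg.mono _ _ (vec_nonneg J hs) (vec_nonneg J (hs.trans hst)) (vec_mono J hs hst) j
  have hfgmono : ∀ s t : ℝ, 0 ≤ s → s ≤ t →
      f (g (allOnes n + s • eVec J)) i ≤ f (g (allOnes n + t • eVec J)) i := fun s t hs hst =>
    hf.mono _ _ (hg.map_nonneg _ (vec_nonneg J hs))
      (hg.map_nonneg _ (vec_nonneg J (hs.trans hst)))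
      (hg.mono _ _ (vec_nonneg J hs) (vec_nonneg J (hs.trans hst)) (vec_mono J hs hst)) i
  have hfzmono : ∀ s t : ℝ, 0 ≤ s → s ≤ t →
      f (allOnes n + s • eVec I) i ≤ f (allOnes n + t • eVec I) i := fun s t hs hst =>
    hf.mono _ _ (vec_nonneg I hs) (vec_nonneg I (hs.trans hst)) (vec_mono I hs hst) i
  constructor
  · -- forward direction
    intro h
    have hBj : ∀ j : Fin n, ∃ B : ℝ, ∀ t : ℝ, 0 ≤ t → j ∉ I →
        g (allOnes n + t • eVec J) j ≤ B := by
      intro j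
      by_cases hj : j ∈ I
      · exact ⟨0, fun t ht hj' => absurd hj hj'⟩
      · have hnt : ¬ Tendsto (fun s : ℝ => g (allOnes n + s • eVec J) j) atTop atTop := hj
        rw [tendsto_atTop_iff_of_monoOn _ (hgmono j)] at hnt
        push_neg at hnt
        obtain ⟨B, hB⟩ := hnt
        exact ⟨B, fun t ht _ => (hB t ht).le⟩
    choose B hB using hBj
    set M : ℝ := max 1 (Finset.univ.sup' hne B) with hMdef
    have hM1 : (1:ℝ) ≤ M := le_max_left _ _
    have hM0 : (0:ℝ) < M := lt_of_lt_of_le one_pos hM1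
    have hMB : ∀ j, B j ≤ M := fun j =>
      le_trans (Finset.le_sup' B (Finset.mem_univ j)) (le_max_right _ _)
    rw [tendsto_atTop_iff_of_monoOn _ hfzmono]
    intro b
    obtain ⟨t, ht0, htb⟩ := (tendsto_atTop_iff_of_monoOn _ hfgmono).mp h (M * b)
    set G : ℝ := Finset.univ.sup' hne (fun j => g (allOnes n + t • eVec J) j) with hGdef
    have hGge : ∀ j, g (allOnes n + t • eVec J) j ≤ G := fun j =>
      Finset.le_sup' _ (Finset.mem_univ j)
    have hG0 : 0 ≤ G := le_trans (hg.map_nonneg _ (vec_nonneg J ht0) i) (hGge i)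
    have hr0 : 0 ≤ G / M := div_nonneg hG0 hM0.le
    refine ⟨G / M, hr0, ?_⟩
    have hle : g (allOnes n + t • eVec J) ≤ M • (allOnes n + (G / M) • eVec I) := by
      intro j
      have hLHS : (M • (allOnes n + (G / M) • eVec I)) j = M * (1 + (G / M) * eVec I j) := rfl
      rw [hLHS]
      by_cases hj : j ∈ I
      · rw [eVec_of_mem hj]
        have hEq : M * (1 + G / M * 1) = M + G := by field_simp
        rw [hEq]
        exact le_trans (hGge j) (by linarith)
      · rw [eVec_of_not_mem hj]
        have h1 := hB j t ht0 hj
        have h2 := hMB j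
        nlinarith
    have hnz : Nonneg (M • (allOnes n + (G / M) • eVec I)) := fun j =>
      mul_nonneg hM0.le (vec_nonneg I hr0 j)
    have key := hf.mono _ _ (hg.map_nonneg _ (vec_nonneg J ht0)) hnz hle i
    rw [hf.hom M hM0 _ (vec_nonneg I hr0)] at key
    have hsm : (M • f (allOnes n + (G / M) • eVec I)) i
        = M * f (allOnes n + (G / M) • eVec I) i := rfl
    rw [hsm] at key
    exact le_of_mul_le_mul_left (le_trans htb key) hM0
  · -- backward direction
    intro h
    set ε : ℝ := Finset.univ.inf' hne (fun j => g (allOnes n) j) with hεdef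
    have hpos : Pos (g (allOnes n)) := hg.map_pos _ (fun j => one_pos)
    have hε0 : 0 < ε := by
      rw [hεdef, Finset.lt_inf'_iff]
      exact fun j _ => hpos j
    have hεle : ∀ j, ε ≤ g (allOnes n) j := fun j =>
      Finset.inf'_le _ (Finset.mem_univ j)
    rw [tendsto_atTop_iff_of_monoOn _ hfgmono]
    intro b
    obtain ⟨s₀, hs₀0, hs₀⟩ := (tendsto_atTop_iff_of_monoOn _ hfzmono).mp h (b / ε)
    have hev : ∀ᶠ t in (atTop : Filter ℝ), ∀ j ∈ I,
        ε * (1 + s₀) ≤ g (allOnes n + t • eVec J) j := by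
      rw [eventually_all_finite (Set.toFinite I)]
      intro j hj
      exact tendsto_atTop.mp hj (ε * (1 + s₀))
    obtain ⟨T, hTj, hT0⟩ := (hev.and (eventually_ge_atTop 0)).exists
    refine ⟨T, hT0, ?_⟩
    have hle : ε • (allOnes n + s₀ • eVec I) ≤ g (allOnes n + T • eVec J) := by
      intro j
      have hLHS : (ε • (allOnes n + s₀ • eVec I)) j = ε * (1 + s₀ * eVec I j) := rfl
      rw [hLHS]
      by_cases hj : j ∈ I
      · rw [eVec_of_mem hj, mul_one]
        exact hTj j hj
      · rw [eVec_of_not_mem hj, mul_zero, add_zero, mul_one]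
        exact le_trans (hεle j)
          (hg.mono _ _ (allOnes_nonneg n) (vec_nonneg J hT0) (allOnes_le_vec J hT0) j)
    have hnz : Nonneg (ε • (allOnes n + s₀ • eVec I)) := fun j =>
      mul_nonneg hε0.le (vec_nonneg I hs₀0 j)
    have key := hf.mono _ _ hnz (hg.map_nonneg _ (vec_nonneg J hT0)) hle i
    rw [hf.hom ε hε0 _ (vec_nonneg I hs₀0)] at key
    have hsm : (ε • f (allOnes n + s₀ • eVec I)) i = ε * f (allOnes n + s₀ • eVec I) i := rfl
    rw [hsm] at key
    have hb : b ≤ ε * f (allOnes n + s₀ • eVec I) i := by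
      rw [mul_comm]
      exact (div_le_iff₀ hε0).mp hs₀
    exact hb.trans key
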